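/- arXiv:0706.0715 — 4 statements merged into one kernel-verified Lean document; each statement's English description precedes it below -/
import Mathlib

section
/- Let a be a family of rational numbers a(m, c̃, c) as in the context, satisfying (V), (R1), (R2) and (D), and let Θ_m(c) be defined from a by the formula in the context. Then Θ satisfies the relation (R̃1): for every integer m > 1, every finite index set J, and every tuple c = (c_j)_{j∈J} of integers with c_j > 1 for all j ∈ J, one has Θ_m((c_j)_{j∈J}) = −(m−1)·Θ_{m−1}((c_j)_{j∈J}) + Σ_{j∈J} Θ_{m−1}((c_j − 1) together with (c_{j'})_{j'∈J−{j}}). -/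
/-!
Bracket families `a m c̃ c` model the intersection numbers `⟨c̃;(c_j)_{j∈J}⟩_{(I,J)}`
on blowups of moduli spaces of genus-one curves, with `m = |I|` and `c` the multiset
of exponents `(c_j)_{j∈J}`.
-/

open scoped Classical

/-- The multinomial coefficient `M(J_i)` from the definition of `Θ`. -/
noncomputable def Mcoef {ι : Type} (Ji : Finset ι) (c : ι → ℤ) : ℚ :=
  if Ji = ∅ then 1
  else if (∃ j ∈ Ji, c j < 0) ∨ ((Ji.card : ℤ) - 1 < ∑ j ∈ Ji, c j) then 0
  else (Nat.factorial (Ji.card - 1) : ℚ) /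
    ((∏ j ∈ Ji, (Nat.factorial (c j).toNat : ℚ)) *
      (Nat.factorial ((Ji.card : ℤ) - 1 - ∑ j ∈ Ji, c j).toNat : ℚ))

/-- The coefficient `Θ_m((c_j)_{j∈J})` defined from a bracket family `a`:
the sum over all functions `φ : J → {0,1,…,m}` of
`(−1)^{m+|J_0|−p(J_0)} · (∏_{i=1}^m M(J_i)) · a(m, m+|J|−p(J_0), (c_j)_{j∈J_0})`,
where `J_i = φ⁻¹(i)` and `p(S) = Σ_{j∈S} c_j`. -/
noncomputable def Theta (a : ℕ → ℤ → Multiset ℤ → ℚ) (m : ℕ)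
    {ι : Type} [Fintype ι] [DecidableEq ι] (c : ι → ℤ) : ℚ :=
  ∑ φ : ι → Fin (m + 1),
    ((-1 : ℚ) ^ ((m : ℤ) + ((Finset.univ.filter fun j => φ j = 0).card : ℤ)
        - ∑ j ∈ Finset.univ.filter fun j => φ j = 0, c j)) *
    (∏ i : Fin m, Mcoef (Finset.univ.filter fun j => φ j = i.succ) c) *
    a m ((m : ℤ) + (Fintype.card ι : ℤ)
        - ∑ j ∈ Finset.univ.filter fun j => φ j = 0, c j)
      (((Finset.univ.filter fun j => φ j = 0).val).map c)

lemma Mcoef_eq_zero {ι : Type} (Ji : Finset ι) (c : ι → ℤ) (h : Ji ≠ ∅)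
    (hc : ∀ j, 1 ≤ c j) : Mcoef Ji c = 0 := by
  rw [Mcoef, if_neg h, if_pos]
  right
  have h1 : (Ji.card : ℤ) ≤ ∑ j ∈ Ji, c j := by
    calc (Ji.card : ℤ) = ∑ _j ∈ Ji, (1 : ℤ) := by simp
    _ ≤ ∑ j ∈ Ji, c j := Finset.sum_le_sum fun j _ => hc j
  have h2 : 0 < Ji.card := Finset.card_pos.mpr (Finset.nonempty_iff_ne_empty.mpr h)
  omega

lemma theta_eq (a : ℕ → ℤ → Multiset ℤ → ℚ) (m : ℕ)
    {ι : Type} [Fintype ι] [DecidableEq ι] (c : ι → ℤ) (hc : ∀ j, 1 ≤ c j) :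
    Theta a m c = (-1 : ℚ) ^ ((m : ℤ) + (Fintype.card ι : ℤ) - ∑ j, c j) *
      a m ((m : ℤ) + (Fintype.card ι : ℤ) - ∑ j, c j) (Finset.univ.val.map c) := by
  rw [Theta, Finset.sum_eq_single (fun _ => (0 : Fin (m + 1)))]
  · have hfil : (Finset.univ.filter fun j : ι => (fun _ : ι => (0 : Fin (m+1))) j = 0)
        = Finset.univ := by simp
    have hprod : (∏ i : Fin m, Mcoef (Finset.univ.filter
        fun j : ι => (fun _ : ι => (0 : Fin (m+1))) j = i.succ) c) = 1 := by
      apply Finset.prod_eq_one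
      intro i _
      have : (Finset.univ.filter fun j : ι =>
          (fun _ : ι => (0 : Fin (m+1))) j = i.succ) = ∅ := by
        simp [(Fin.succ_ne_zero i).symm]
      rw [this, Mcoef, if_pos rfl]
    rw [hfil, hprod, mul_one]
    simp
  · intro φ _ hφ
    obtain ⟨j, hj⟩ := Function.ne_iff.mp hφ
    obtain ⟨i, hi⟩ := Fin.eq_succ_of_ne_zero hj
    have hz : Mcoef (Finset.univ.filter fun k => φ k = i.succ) c = 0 := by
      apply Mcoef_eq_zero _ _ _ hc
      apply Finset.nonempty_iff_ne_empty.mp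
      exact ⟨j, Finset.mem_filter.mpr ⟨Finset.mem_univ j, hi⟩⟩
    rw [Finset.prod_eq_zero (Finset.mem_univ i) hz, mul_zero, zero_mul]
  · intro h; exact absurd (Finset.mem_univ _) h

lemma map_update {ι : Type} [Fintype ι] [DecidableEq ι] (c : ι → ℤ) (j : ι) (v : ℤ) :
    Finset.univ.val.map (Function.update c j v)
      = v ::ₘ (Finset.univ.val.erase j).map c := by
  have hj : j ∈ (Finset.univ : Finset ι).val := Finset.mem_univ_val j
  conv_lhs => rw [← Multiset.cons_erase hj]
  rw [Multiset.map_cons, Function.update_self]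
  congr 1
  apply Multiset.map_congr rfl
  intro x hx
  exact Function.update_of_ne ((Finset.univ.nodup.mem_erase_iff.mp hx).1) _ _

lemma erase_map {ι : Type} [Fintype ι] [DecidableEq ι] (c : ι → ℤ) (j : ι) :
    (Finset.univ.val.map c).erase (c j) = (Finset.univ.val.erase j).map c := by
  have hj : j ∈ (Finset.univ : Finset ι).val := Finset.mem_univ_val j
  conv_lhs => rw [← Multiset.cons_erase hj]
  rw [Multiset.map_cons, Multiset.erase_cons_head]

/-- Relation (R̃1): if `m > 1` and all `c_j > 1`, then
`Θ_m(c) = −(m−1)·Θ_{m−1}(c) + Σ_j Θ_{m−1}(c with c_j replaced by c_j − 1)`. -/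
theorem theta_rel_R1tilde
    (a : ℕ → ℤ → Multiset ℤ → ℚ)
    (hV : ∀ (m : ℕ) (ct : ℤ) (c : Multiset ℤ),
      ¬ (ct + c.sum = (m : ℤ) + c.card ∧ 0 ≤ ct ∧ ∀ x ∈ c, 0 ≤ x) → a m ct c = 0)
    (hR1 : ∀ (m : ℕ), 1 ≤ m → ∀ (ct : ℤ) (c : Multiset ℤ),
      (∀ x ∈ c, 0 < x) → a m ct c = a (m - 1) ct (0 ::ₘ c))
    (hR2 : ∀ (m : ℕ) (ct : ℤ) (c' : Multiset ℤ),
      a m ct (0 ::ₘ c') = (m : ℚ) * a m (ct - 1) c'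
        + ((c'.map fun e => a m ct ((e - 1) ::ₘ c'.erase e)).sum))
    (hD : ∀ (m : ℕ) (ct : ℤ) (c' : Multiset ℤ),
      a m ct (1 ::ₘ c') = ((m : ℚ) + (c'.card : ℚ)) * a m ct c')
    {ι : Type} [Fintype ι] [DecidableEq ι]
    (m : ℕ) (hm : 1 < m) (c : ι → ℤ) (hc : ∀ j, 1 < c j) :
    Theta a m c = -((m : ℚ) - 1) * Theta a (m - 1) c
      + ∑ j : ι, Theta a (m - 1) (Function.update c j (c j - 1)) := by

  have hm1 : 1 ≤ m := hm.le
  have hcast : ((m - 1 : ℕ) : ℤ) = (m : ℤ) - 1 := by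
    push_cast [Nat.cast_sub hm1]; ring
  have hcastQ : ((m - 1 : ℕ) : ℚ) = (m : ℚ) - 1 := by
    push_cast [Nat.cast_sub hm1]; ring
  set n : ℤ := (Fintype.card ι : ℤ) with hn
  set p : ℤ := ∑ j, c j with hp
  set C : Multiset ℤ := Finset.univ.val.map c with hC
  set t : ℤ := (m : ℤ) + n - p with ht
  have h1 : Theta a m c = (-1 : ℚ) ^ t * a m t C :=
    theta_eq a m c fun j => (hc j).le
  have h2 : Theta a (m - 1) c = (-1 : ℚ) ^ (t - 1) * a (m - 1) (t - 1) C := by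
    rw [theta_eq a (m - 1) c fun j => (hc j).le]
    have e : ((m - 1 : ℕ) : ℤ) + n - p = t - 1 := by rw [hcast, ht]; ring
    rw [e]
  have h3 : ∀ j : ι, Theta a (m - 1) (Function.update c j (c j - 1))
      = (-1 : ℚ) ^ t * a (m - 1) t ((c j - 1) ::ₘ C.erase (c j)) := by
    intro j
    have hcj : ∀ k, 1 ≤ Function.update c j (c j - 1) k := by
      intro k
      rcases eq_or_ne k j with rfl | h
      · rw [Function.update_self]; linarith [hc k]
      · rw [Function.update_of_ne h]; exact (hc k).le
    rw [theta_eq a (m - 1) _ hcj]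
    have hsum : ∑ k, Function.update c j (c j - 1) k = p - 1 := by
      rw [Finset.sum_update_of_mem (Finset.mem_univ j), Finset.sdiff_singleton_eq_erase]
      have h4 := Finset.add_sum_erase Finset.univ c (Finset.mem_univ j)
      rw [hp]; linarith [h4]
    rw [hsum]
    have e : ((m - 1 : ℕ) : ℤ) + n - (p - 1) = t := by rw [hcast, ht]; ring
    rw [e, map_update, ← erase_map, ← hC]
  have key : a m t C = ((m : ℚ) - 1) * a (m - 1) (t - 1) C
      + ∑ j : ι, a (m - 1) t ((c j - 1) ::ₘ C.erase (c j)) := by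
    rw [hR1 m hm1 t C (by
      intro x hx
      rw [hC] at hx
      obtain ⟨k, _, rfl⟩ := Multiset.mem_map.mp hx
      linarith [hc k])]
    rw [hR2]
    congr 1
    · rw [hcastQ]
    · rw [hC, Multiset.map_map, Finset.sum_eq_multiset_sum]
      rfl
  have hsign : (-1 : ℚ) ^ (t - 1) = -(-1 : ℚ) ^ t := by
    rw [zpow_sub₀ (by norm_num : (-1 : ℚ) ≠ 0), zpow_one]; ring
  rw [h1, h2, hsign, key]
  simp only [h3]
  rw [← Finset.mul_sum]
  ring
end

section
/- Suppose Θ assigns to each positive integer m and each finite multiset c of integers a rational number Θ_m(c), and suppose: (i) Θ_m(c) = 0 whenever some entry of c is negative; (ii) whenever 0 is an entry of c, writing c = {0} ⊎ c′, one has Θ_m(c) = Σ over the entries e of c′ of Θ_m(c′ with one copy of e replaced by e−1) (relation (R̃2)). Then for every m ≥ 1 and every finite multiset c of nonnegative integers whose sum of entries is strictly less than its cardinality (counted with multiplicity), Θ_m(c) = 0. -/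
/-- If `Θ` assigns a rational number to each positive integer `m` and finite multiset `c`
of integers, vanishes whenever some entry of `c` is negative, and satisfies the recursion
(R̃2) (whenever `0` is an entry of `c`, writing `c = {0} ⊎ c′`, `Θ_m(c)` is the sum over
the entries `e` of `c′` of `Θ_m(c′ with one copy of e replaced by e−1)`), then
`Θ_m(c) = 0` for every `m ≥ 1` and every finite multiset `c` of nonnegative integers
whose sum of entries is strictly less than its cardinality. -/
theorem theta_vanishing
    (Θ : ℕ → Multiset ℤ → ℚ)
    (hneg : ∀ (m : ℕ) (c : Multiset ℤ), (∃ x ∈ c, x < 0) → Θ m c = 0)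
    (hR2 : ∀ (m : ℕ) (c' : Multiset ℤ),
      Θ m (0 ::ₘ c') = ((c'.map fun e => Θ m ((e - 1) ::ₘ c'.erase e)).sum)) :
    ∀ (m : ℕ), 1 ≤ m → ∀ c : Multiset ℤ,
      (∀ x ∈ c, 0 ≤ x) → c.sum < (c.card : ℤ) → Θ m c = 0 := by
  intro m _hm
  have hcardsum : ∀ s : Multiset ℤ, (∀ x ∈ s, 1 ≤ x) → (s.card : ℤ) ≤ s.sum := by
    intro s
    induction s using Multiset.induction with
    | empty => simp
    | cons a t iht =>
      intro hs
      have ha := hs a (Multiset.mem_cons_self a t)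
      have ht := iht fun x hx => hs x (Multiset.mem_cons_of_mem hx)
      simp only [Multiset.sum_cons, Multiset.card_cons]
      push_cast
      omega
  suffices H : ∀ n : ℕ, ∀ c : Multiset ℤ, c.card = n →
      (∀ x ∈ c, 0 ≤ x) → c.sum < (c.card : ℤ) → Θ m c = 0 by
    intro c hpos hsum; exact H c.card c rfl hpos hsum
  intro n
  induction n with
  | zero =>
    intro c hcard hpos hsum
    rw [hcard] at hsum
    rw [Multiset.card_eq_zero.mp hcard] at hsum
    simp at hsum
  | succ n ih =>
    intro c hcard hpos hsum
    have h0 : (0 : ℤ) ∈ c := by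
      by_contra h0
      have h1 : ∀ x ∈ c, (1 : ℤ) ≤ x := by
        intro x hx
        rcases lt_or_eq_of_le (hpos x hx) with h | h
        · exact h
        · exact absurd (h ▸ hx) h0
      exact absurd hsum (not_lt.mpr (hcardsum c h1))
    set c' := c.erase 0 with hc'
    have hcons : (0 : ℤ) ::ₘ c' = c := Multiset.cons_erase h0
    have hcc : c'.card = n := by
      rw [hc', Multiset.card_erase_of_mem h0, hcard]; rfl
    rw [← hcons, hR2]
    apply Multiset.sum_eq_zero
    intro x hx
    rw [Multiset.mem_map] at hx
    obtain ⟨e, he, rfl⟩ := hx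
    have hepos : 0 ≤ e := hpos e (Multiset.mem_of_mem_erase he)
    have hcee : (c'.erase e).card = n - 1 := by
      rw [Multiset.card_erase_of_mem he, hcc]; rfl
    have hn1 : 1 ≤ n := by
      rcases Nat.eq_zero_or_pos n with hn | hn
      · exact absurd (Multiset.card_eq_zero.mp (hn ▸ hcc) ▸ he) (by simp)
      · exact hn
    rcases eq_or_lt_of_le hepos with h | h
    · apply hneg
      exact ⟨e - 1, Multiset.mem_cons_self _ _, by omega⟩
    · apply ih
      · rw [Multiset.card_cons, hcee]; omega
      · intro x hx
        rcases Multiset.mem_cons.mp hx with rfl | hx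
        · omega
        · exact hpos x (Multiset.mem_of_mem_erase (Multiset.mem_of_mem_erase hx))
      · have hce : e ::ₘ c'.erase e = c' := Multiset.cons_erase he
        have hs1 : c'.sum = e + (c'.erase e).sum := by
          conv_lhs => rw [← hce]
          rw [Multiset.sum_cons]
        have hs2 : c.sum = c'.sum := by rw [← hcons]; simp
        rw [Multiset.sum_cons, Multiset.card_cons, hcee]
        rw [hcard] at hsum
        push_cast [hn1]
        omega
end

section
/- Fix an integer n ≥ 3, let I_{0,q} ∈ ℚ[t][[X]] be the hypergeometric coefficients defined in the context, and let D be the formal t-derivative on ℚ[t][[X]] (the derivation with D(t) = 1 and D(X) = X, corresponding to d/dt with X = e^t). For p ≥ 1 and q ≥ p, define recursively I_{p,q} = D(I_{p−1,q} · I_{p−1,p−1}^{−1}). Then for every p ≥ 0, the diagonal term I_{p,p} lies in ℚ[[X]] (i.e., it involves no t) and has constant term 1; in particular each I_{p,p} is invertible in ℚ[t][[X]], so the recursion defining I_{p,q} is well-defined at every stage. -/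
/-!
The hypergeometric series `R(w,t) = e^{wt} Σ_d e^{dt} (∏_{r=1}^{nd}(nw+r))/(∏_{r=1}^d(w+r)^n)`
is modeled in `(ℚ[t][[X]])[[w]]`, where `X` plays the role of `e^t`, `t` is the polynomial
variable, and `w` is the outer power series variable.
-/

/-- The degree-`d` factor `(∏_{r=1}^{nd}(nw+r))/(∏_{r=1}^{d}(w+r)^n) ∈ ℚ[[w]]`;
the denominator has nonzero constant term `(d!)^n` and is inverted in `ℚ[[w]]`. -/
noncomputable def hgF (n d : ℕ) : PowerSeries ℚ :=
  (∏ r ∈ Finset.Icc 1 (n * d), ((n : ℚ) • PowerSeries.X + PowerSeries.C (r : ℚ))) *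
    (∏ r ∈ Finset.Icc 1 d, (PowerSeries.X + PowerSeries.C (r : ℚ)) ^ n)⁻¹

/-- The series `R(w) = exp(wt) · Σ_{d=0}^∞ X^d · hgF n d ∈ (ℚ[t][[X]])[[w]]`,
where `exp(wt) = Σ_k t^k w^k / k!`. -/
noncomputable def hgR (n : ℕ) : PowerSeries (PowerSeries (Polynomial ℚ)) :=
  (PowerSeries.mk fun k => PowerSeries.C
      ((1 / (k.factorial : ℚ)) • (Polynomial.X : Polynomial ℚ) ^ k)) *
    (PowerSeries.mk fun q => PowerSeries.mk fun d =>
      Polynomial.C (PowerSeries.coeff q (hgF n d)))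

/-- The hypergeometric coefficient `I_{0,q} ∈ ℚ[t][[X]]`: the coefficient of `w^q` in `R(w)`. -/
noncomputable def I0 (n q : ℕ) : PowerSeries (Polynomial ℚ) :=
  PowerSeries.coeff q (hgR n)

/-- The formal `t`-derivative on `ℚ[t][[X]]`: the derivation with `D(t) = 1` and
`D(X) = X`, i.e. `D(t^a X^d) = a t^{a−1} X^d + d t^a X^d`, modeling `d/dt` with `X = e^t`. -/
noncomputable def Dt (f : PowerSeries (Polynomial ℚ)) : PowerSeries (Polynomial ℚ) :=
  PowerSeries.mk fun d =>
    Polynomial.derivative (PowerSeries.coeff d f) +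
      d • PowerSeries.coeff d f

/-- The recursively defined series `I_{p,q} := D(I_{p−1,q} · I_{p−1,p−1}⁻¹)`, where
the inverse is `Ring.inverse` (the genuine inverse whenever `I_{p−1,p−1}` is a unit). -/
noncomputable def Ipq (n : ℕ) : ℕ → ℕ → PowerSeries (Polynomial ℚ)
  | 0, q => I0 n q
  | (p + 1), q => Dt (Ipq n p q * Ring.inverse (Ipq n p p))

namespace HGaux

open PowerSeries

theorem Dt_coeff (f : PowerSeries (Polynomial ℚ)) (d : ℕ) :
    coeff d (Dt f) = Polynomial.derivative (coeff d f) + d • coeff d f := by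
  simp [Dt]

theorem Dt_add (f g : PowerSeries (Polynomial ℚ)) : Dt (f + g) = Dt f + Dt g := by
  apply PowerSeries.ext; intro d
  simp [Dt_coeff, smul_add]
  ring

theorem Dt_mul (f g : PowerSeries (Polynomial ℚ)) : Dt (f * g) = Dt f * g + f * Dt g := by
  apply PowerSeries.ext; intro d
  rw [Dt_coeff, map_add, PowerSeries.coeff_mul, PowerSeries.coeff_mul, PowerSeries.coeff_mul,
    map_sum, Finset.smul_sum, ← Finset.sum_add_distrib, ← Finset.sum_add_distrib]
  apply Finset.sum_congr rfl
  intro x hx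
  rw [Finset.HasAntidiagonal.mem_antidiagonal] at hx
  rw [Dt_coeff, Dt_coeff, Polynomial.derivative_mul, ← hx, add_nsmul, add_mul, mul_add,
    smul_mul_assoc, mul_smul_comm]
  ring

theorem Dt_sum {ι : Type*} (s : Finset ι) (f : ι → PowerSeries (Polynomial ℚ)) :
    Dt (∑ x ∈ s, f x) = ∑ x ∈ s, Dt (f x) :=
  map_sum (AddMonoidHom.mk' Dt Dt_add) f s

/-- coefficientwise `ℚ ↪ ℚ[t]` on `ℚ[[X]]`. -/
noncomputable def K : PowerSeries ℚ →+* PowerSeries (Polynomial ℚ) :=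
  PowerSeries.map (Polynomial.C)

theorem coeff_K (g : PowerSeries ℚ) (d : ℕ) :
    coeff d (K g) = Polynomial.C (coeff d g) := by simp [K, PowerSeries.coeff_map]

/-- the Euler operator `θ = X d/dX` on `ℚ[[X]]`. -/
noncomputable def Th (g : PowerSeries ℚ) : PowerSeries ℚ :=
  PowerSeries.mk fun d => d • coeff d g

theorem coeff_Th (g : PowerSeries ℚ) (d : ℕ) : coeff d (Th g) = d • coeff d g := by
  simp [Th]

theorem Th_one : Th 1 = 0 := by
  apply PowerSeries.ext; intro d
  cases d <;> simp [coeff_Th, PowerSeries.coeff_one]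

theorem Th_zero : Th 0 = 0 := by
  apply PowerSeries.ext; intro d
  simp [coeff_Th]

theorem constantCoeff_Th (g : PowerSeries ℚ) : constantCoeff (Th g) = 0 := by
  rw [← PowerSeries.coeff_zero_eq_constantCoeff, coeff_Th]; simp

/-- `θ` applied to each `w`-coefficient. -/
noncomputable def TH (N : PowerSeries (PowerSeries ℚ)) : PowerSeries (PowerSeries ℚ) :=
  PowerSeries.mk fun q => Th (coeff q N)

theorem coeff_TH (N : PowerSeries (PowerSeries ℚ)) (q : ℕ) :
    coeff q (TH N) = Th (coeff q N) := by simp [TH]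

theorem Dt_K (g : PowerSeries ℚ) : Dt (K g) = K (Th g) := by
  apply PowerSeries.ext; intro d
  rw [Dt_coeff, coeff_K, coeff_K, coeff_Th, Polynomial.derivative_C, zero_add, map_nsmul]

/-- `exp(wt)` as an element of `(ℚ[t][[X]])[[w]]`. -/
noncomputable def E : PowerSeries (PowerSeries (Polynomial ℚ)) :=
  PowerSeries.mk fun k => PowerSeries.C
      ((1 / (k.factorial : ℚ)) • (Polynomial.X : Polynomial ℚ) ^ k)

theorem Dt_C (P : Polynomial ℚ) :
    Dt (PowerSeries.C P) = PowerSeries.C (Polynomial.derivative P) := by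
  apply PowerSeries.ext; intro d
  cases d <;> simp [Dt_coeff, PowerSeries.coeff_C]

theorem Dt_E (k : ℕ) : Dt (coeff k E) = coeff k (PowerSeries.X * E) := by
  cases k with
  | zero =>
      rw [PowerSeries.coeff_zero_X_mul]
      simp only [E, coeff_mk]
      rw [Dt_C]
      norm_num
  | succ k =>
      rw [PowerSeries.coeff_succ_X_mul]
      simp only [E, coeff_mk, Dt_C]
      congr 1
      rw [Polynomial.derivative_smul, Polynomial.derivative_X_pow, Nat.add_sub_cancel,
        ← Polynomial.smul_eq_C_mul, smul_smul]
      congr 1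
      rw [Nat.factorial_succ]
      push_cast
      field_simp

/-- The key differential identity: applying `Dt` to a `w`-coefficient of `E · K(N)`
amounts to applying `w + θ` to `N`. -/
theorem Dt_coeff_E_mul (N : PowerSeries (PowerSeries ℚ)) (q : ℕ) :
    Dt (coeff q (E * PowerSeries.map K N)) =
      coeff q (E * PowerSeries.map K (PowerSeries.X * N + TH N)) := by
  rw [show PowerSeries.map K (PowerSeries.X * N + TH N) =
      PowerSeries.X * PowerSeries.map K N + PowerSeries.map K (TH N) by
    rw [map_add, map_mul, PowerSeries.map_X]]
  rw [mul_add]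
  have h1 : E * (PowerSeries.X * PowerSeries.map K N) =
      (PowerSeries.X * E) * PowerSeries.map K N := by ring
  rw [h1, map_add, PowerSeries.coeff_mul, PowerSeries.coeff_mul, PowerSeries.coeff_mul,
    Dt_sum, ← Finset.sum_add_distrib]
  apply Finset.sum_congr rfl
  intro x hx
  rw [PowerSeries.coeff_map, PowerSeries.coeff_map, Dt_mul, Dt_E, Dt_K, coeff_TH]

theorem coeff_diag (M : PowerSeries (PowerSeries ℚ)) (p : ℕ)
    (hA : ∀ j < p, coeff j M = 0) :
    coeff p (E * PowerSeries.map K M) = K (coeff p M) := by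
  rw [PowerSeries.coeff_mul]
  rw [Finset.sum_eq_single (0, p)]
  · rw [PowerSeries.coeff_map]
    simp only [E, coeff_mk]
    norm_num
  · intro b hb hne
    rw [Finset.HasAntidiagonal.mem_antidiagonal] at hb
    have hb2 : b.2 < p := by
      rcases Nat.lt_or_ge b.2 p with h | h
      · exact h
      · exfalso
        have : b.2 = p := le_antisymm (by omega) h
        have : b.1 = 0 := by omega
        exact hne (Prod.ext this ‹b.2 = p›)
    rw [PowerSeries.coeff_map, hA b.2 hb2, map_zero, mul_zero]
  · intro h
    exact absurd (Finset.HasAntidiagonal.mem_antidiagonal.2 (by simp)) h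

/-- `Σ_d X^d hgF n d` as an element of `ℚ[[X]][[w]]`. -/
noncomputable def Fser (n : ℕ) : PowerSeries (PowerSeries ℚ) :=
  PowerSeries.mk fun q => PowerSeries.mk fun d => PowerSeries.coeff q (hgF n d)

/-- The `t`-free model of the recursion: `M_{p+1} = (w + θ)(M_p / [w^p]M_p)`. -/
noncomputable def M (n : ℕ) : ℕ → PowerSeries (PowerSeries ℚ)
  | 0 => Fser n
  | p + 1 =>
    PowerSeries.X * (M n p * PowerSeries.C ((coeff p (M n p))⁻¹)) +
      TH (M n p * PowerSeries.C ((coeff p (M n p))⁻¹))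

theorem hgR_eq (n : ℕ) : hgR n = E * PowerSeries.map K (Fser n) := by
  have h2 : PowerSeries.map K (Fser n) =
      PowerSeries.mk fun q => PowerSeries.mk fun d =>
        Polynomial.C (PowerSeries.coeff q (hgF n d)) := by
    apply PowerSeries.ext; intro q
    rw [PowerSeries.coeff_map]
    apply PowerSeries.ext; intro d
    simp only [Fser, coeff_mk, K, PowerSeries.coeff_map]
  rw [h2]; rfl

theorem hgF_zero (n : ℕ) : hgF n 0 = 1 := by
  have h : Finset.Icc 1 0 = (∅ : Finset ℕ) := Finset.Icc_eq_empty (by omega)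
  rw [hgF, mul_zero, h, Finset.prod_empty, Finset.prod_empty, inv_one, one_mul]

theorem main (n : ℕ) : ∀ p : ℕ,
    (∀ j, j < p → coeff j (M n p) = 0) ∧
    constantCoeff (coeff p (M n p)) = 1 ∧
    ∀ q, Ipq n p q = coeff q (E * PowerSeries.map K (M n p)) := by
  intro p
  induction p with
  | zero =>
    refine ⟨fun j hj => absurd hj (Nat.not_lt_zero j), ?_, fun q => ?_⟩
    · have hM0 : M n 0 = Fser n := rfl
      rw [hM0, ← PowerSeries.coeff_zero_eq_constantCoeff_apply]
      simp only [Fser, coeff_mk, hgF_zero]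
      simp
    · rw [show Ipq n 0 q = coeff q (hgR n) from rfl, hgR_eq]
      rfl
  | succ p ih =>
    obtain ⟨hA, hB, hC⟩ := ih
    set J : PowerSeries ℚ := coeff p (M n p) with hJdef
    set N : PowerSeries (PowerSeries ℚ) := M n p * PowerSeries.C (J⁻¹) with hNdef
    have hM1 : M n (p + 1) = PowerSeries.X * N + TH N := rfl
    have hJc : J * J⁻¹ = 1 := PowerSeries.mul_inv_cancel J (by rw [hB]; exact one_ne_zero)
    have coeffN : ∀ j, coeff j N = coeff j (M n p) * J⁻¹ := fun j =>
      PowerSeries.coeff_mul_C j (M n p) (J⁻¹)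
    have hNlt : ∀ j, j < p → coeff j N = 0 := fun j hj => by
      rw [coeffN, hA j hj, zero_mul]
    have hNp : coeff p N = 1 := by rw [coeffN, ← hJdef, hJc]
    have hThN : ∀ j, j ≤ p → Th (coeff j N) = 0 := by
      intro j hj
      rcases lt_or_eq_of_le hj with h | h
      · rw [hNlt j h, Th_zero]
      · rw [h, hNp, Th_one]
    have hco : ∀ j, coeff j (M n (p + 1)) =
        coeff j (PowerSeries.X * N) + Th (coeff j N) := by
      intro j
      rw [hM1, map_add, coeff_TH]
    have hdiag : Ipq n p p = K J := by rw [hC p, coeff_diag _ p hA]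
    have hKunit : K J * K J⁻¹ = 1 := by rw [← map_mul, hJc, map_one]
    have hu : IsUnit (K J) := IsUnit.of_mul_eq_one _ hKunit
    have hRinv : Ring.inverse (Ipq n p p) = K J⁻¹ := by
      rw [hdiag]
      exact hu.mul_left_cancel ((Ring.mul_inverse_cancel _ hu).trans hKunit.symm)
    have hmapN : E * PowerSeries.map K N =
        (E * PowerSeries.map K (M n p)) * PowerSeries.C (K J⁻¹) := by
      rw [hNdef, map_mul, PowerSeries.map_C, mul_assoc]
    refine ⟨?_, ?_, fun q => ?_⟩
    · intro j hj
      cases j with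
      | zero => rw [hco 0, PowerSeries.coeff_zero_X_mul, hThN 0 (Nat.zero_le p), add_zero]
      | succ j' =>
        rw [hco, PowerSeries.coeff_succ_X_mul, hNlt j' (by omega), hThN _ (by omega),
          add_zero]
    · rw [hco, PowerSeries.coeff_succ_X_mul, hNp, map_add, map_one, constantCoeff_Th, add_zero]
    · show Dt (Ipq n p q * Ring.inverse (Ipq n p p)) = _
      rw [hC q, hRinv, ← PowerSeries.coeff_mul_C, ← hmapN, Dt_coeff_E_mul, ← hM1]

end HGaux

/-- For `n ≥ 3`, every diagonal term `I_{p,p}` lies in `ℚ[[X]]` (each `X`-coefficient is a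
constant polynomial in `t`) and has constant term `1`; in particular each `I_{p,p}` is
invertible in `ℚ[t][[X]]`, so the recursion defining `I_{p,q}` is well-defined. -/
theorem Ipp_diagonal (n : ℕ) (hn : 3 ≤ n) :
    ∀ p : ℕ,
      (∀ d : ℕ, ∃ aq : ℚ,
        PowerSeries.coeff d (Ipq n p p) = Polynomial.C aq) ∧
      PowerSeries.constantCoeff (Ipq n p p) = 1 ∧
      IsUnit (Ipq n p p) := by
  intro p
  obtain ⟨hA, hB, hC⟩ := HGaux.main n p
  set J : PowerSeries ℚ := PowerSeries.coeff p (HGaux.M n p) with hJdef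
  have hdiag : Ipq n p p = HGaux.K J := by rw [hC p, HGaux.coeff_diag _ p hA]
  have hJc : J * J⁻¹ = 1 := PowerSeries.mul_inv_cancel J (by rw [hB]; exact one_ne_zero)
  refine ⟨fun d => ⟨PowerSeries.coeff d J, ?_⟩, ?_, ?_⟩
  · rw [hdiag, HGaux.coeff_K]
  · rw [hdiag, ← PowerSeries.coeff_zero_eq_constantCoeff_apply, HGaux.coeff_K,
      PowerSeries.coeff_zero_eq_constantCoeff_apply, hB, map_one]
  · rw [hdiag]
    exact IsUnit.of_mul_eq_one (HGaux.K J⁻¹) (by rw [← map_mul, hJc, map_one])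
end

section
/- For every formal power series f ∈ X·ℚ[[X]] (zero constant term), there exists a unique g ∈ X·ℚ[[X]] such that g(X·exp(f(X))) = −f(X) in ℚ[[X]]. Consequently, the change of variables T = t + f(e^t) (such as the mirror map T = I_{0,1}(t)/I_{0,0}(t)) is formally invertible, with inverse of the form t = T + g(e^T). -/
/-- Composition `g ∘ h` of formal power series over `ℚ`, defined coefficientwise by
`coeff k (g ∘ h) = Σ_{j ≤ k} (coeff j g) · coeff k (h^j)`; this is the usual
substitution `g(h(X))` whenever `h` has zero constant term. -/
noncomputable def pcomp (g h : PowerSeries ℚ) : PowerSeries ℚ :=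
  PowerSeries.mk fun k =>
    ∑ j ∈ Finset.range (k + 1), PowerSeries.coeff (R := ℚ) j g * PowerSeries.coeff (R := ℚ) k (h ^ j)

/-- Recursively defined coefficients of the solution `g`. -/
noncomputable def gcoef (h f : PowerSeries ℚ) (k : ℕ) : ℚ :=
  PowerSeries.coeff (R := ℚ) k (-f) - ∑ j ∈ (Finset.range k).attach,
    gcoef h f j * PowerSeries.coeff (R := ℚ) k (h ^ (j : ℕ))
termination_by k
decreasing_by exact Finset.mem_range.mp j.2

lemma gcoef_eq (h f : PowerSeries ℚ) (k : ℕ) :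
    gcoef h f k = PowerSeries.coeff (R := ℚ) k (-f) - ∑ j ∈ Finset.range k,
      gcoef h f j * PowerSeries.coeff (R := ℚ) k (h ^ j) := by
  rw [gcoef, Finset.sum_attach (Finset.range k)
    (fun j => gcoef h f j * PowerSeries.coeff (R := ℚ) k (h ^ j))]

lemma coeff_pcomp (g h : PowerSeries ℚ) (k : ℕ) :
    PowerSeries.coeff (R := ℚ) k (pcomp g h) =
      ∑ j ∈ Finset.range (k + 1), PowerSeries.coeff (R := ℚ) j g * PowerSeries.coeff (R := ℚ) k (h ^ j) := by
  simp [pcomp]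

lemma top_coeff (u : PowerSeries ℚ) (hu : PowerSeries.constantCoeff (R := ℚ) u = 1) (k : ℕ) :
    PowerSeries.coeff (R := ℚ) k ((PowerSeries.X * u) ^ k) = 1 := by
  rw [mul_pow]
  have := PowerSeries.coeff_X_pow_mul (u ^ k) k 0
  rw [zero_add] at this
  rw [this]
  simp [PowerSeries.coeff_zero_eq_constantCoeff, map_pow, hu]

/-- For every `f ∈ X·ℚ[[X]]` there is a unique `g ∈ X·ℚ[[X]]` with
`g(X·exp(f(X))) = −f(X)`; here `exp(f) = Σ_k f^k/k!` is obtained by substituting `f`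
into the exponential series. Consequently the change of variables `T = t + f(e^t)`
(such as the mirror map) is formally invertible, with inverse `t = T + g(e^T)`. -/
theorem mirror_map_inversion (f : PowerSeries ℚ)
    (hf : PowerSeries.constantCoeff (R := ℚ) f = 0) :
    ∃! g : PowerSeries ℚ, PowerSeries.constantCoeff (R := ℚ) g = 0 ∧
      pcomp g (PowerSeries.X * pcomp (PowerSeries.exp ℚ) f) = -f := by
  set u := pcomp (PowerSeries.exp ℚ) f with hu_def
  have hu : PowerSeries.constantCoeff (R := ℚ) u = 1 := by
    rw [hu_def, ← PowerSeries.coeff_zero_eq_constantCoeff, coeff_pcomp]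
    simp [PowerSeries.coeff_exp]
  set h := PowerSeries.X * u with hh_def
  have htop : ∀ k, PowerSeries.coeff (R := ℚ) k (h ^ k) = 1 := top_coeff u hu
  refine ⟨PowerSeries.mk (gcoef h f), ⟨?_, ?_⟩, ?_⟩
  · rw [← PowerSeries.coeff_zero_eq_constantCoeff, PowerSeries.coeff_mk, gcoef_eq]
    simp [hf]
  · ext k
    rw [coeff_pcomp, Finset.sum_range_succ]
    simp only [PowerSeries.coeff_mk]
    rw [htop k, mul_one, gcoef_eq]
    ring
  · rintro g' ⟨-, hg'⟩
    ext k
    induction k using Nat.strong_induction_on with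
    | _ k ih =>
      have := congrArg (PowerSeries.coeff (R := ℚ) k) hg'
      rw [coeff_pcomp, Finset.sum_range_succ, htop k, mul_one] at this
      rw [PowerSeries.coeff_mk, gcoef_eq, ← this]
      have hs : ∑ j ∈ Finset.range k, gcoef h f j * PowerSeries.coeff (R := ℚ) k (h ^ j)
          = ∑ j ∈ Finset.range k, PowerSeries.coeff (R := ℚ) j g' * PowerSeries.coeff (R := ℚ) k (h ^ j) := by
        refine Finset.sum_congr rfl fun j hj => ?_
        rw [ih j (Finset.mem_range.mp hj), PowerSeries.coeff_mk]
      rw [hs]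
      ring
end
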